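/- Let β=(β_n)_{n∈ℕ} be a Cantor base with x_β<+∞. The restriction of θ_β to D_β is a bijection from D_β onto D'_β, and the restriction of θ_β to S_β is a bijection from S_β onto S'_β. -/

import Mathlib

open Filter Topology

/-- A Cantor real base: a sequence of reals `> 1` whose infinite product diverges to `+∞`. -/
structure IsCantorBase (β : ℕ → ℝ) : Prop where
  one_lt : ∀ n, 1 < β n
  prod_tendsto : Tendsto (fun N => ∏ i ∈ Finset.range N, β i) atTop atTop

/-- The product `β_0 ⋯ β_n`. -/
noncomputable def prodUpTo (β : ℕ → ℝ) (n : ℕ) : ℝ := ∏ i ∈ Finset.range (n + 1), β i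

/-- The shifted base `β^(n) = (β_n, β_{n+1}, …)`. -/
def shiftBase (β : ℕ → ℝ) (n : ℕ) : ℕ → ℝ := fun m => β (n + m)

/-- `x_β = Σ_{n} (⌈β_n⌉ - 1)/(β_0 ⋯ β_n)`. -/
noncomputable def xB (β : ℕ → ℝ) : ℝ := ∑' n, ((⌈β n⌉ : ℝ) - 1) / prodUpTo β n

/-- The condition `x_β < +∞`, i.e. the series defining `x_β` converges. -/
def XBSummable (β : ℕ → ℝ) : Prop :=
  Summable (fun n => ((⌈β n⌉ : ℝ) - 1) / prodUpTo β n)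

/-- `val_β(a) = Σ_n a_n/(β_0 ⋯ β_n)`. -/
noncomputable def valB (β : ℕ → ℝ) (a : ℕ → ℤ) : ℝ := ∑' n, (a n : ℝ) / prodUpTo β n

/-- The digit condition `a_n ∈ [[0, ⌈β_n⌉ - 1]]` for all `n`. -/
def validWord (β : ℕ → ℝ) (a : ℕ → ℤ) : Prop := ∀ n, 0 ≤ a n ∧ a n ≤ ⌈β n⌉ - 1

/-- The flip map `θ_β`. -/
noncomputable def theta (β : ℕ → ℝ) (a : ℕ → ℤ) : ℕ → ℤ := fun n => ⌈β n⌉ - 1 - a n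

/-- The greedy remainders `r_{β,n}(x)`. -/
noncomputable def greedyR (β : ℕ → ℝ) (x : ℝ) : ℕ → ℝ
  | 0 => β 0 * x - (⌊β 0 * x⌋ : ℝ)
  | n + 1 => β (n + 1) * greedyR β x n - (⌊β (n + 1) * greedyR β x n⌋ : ℝ)

/-- The greedy digits `ε_{β,n}(x)`; `greedyDigit β x` is the greedy β-expansion `d_β(x)`. -/
noncomputable def greedyDigit (β : ℕ → ℝ) (x : ℝ) : ℕ → ℤ
  | 0 => ⌊β 0 * x⌋
  | n + 1 => ⌊β (n + 1) * greedyR β x n⌋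

/-- The lazy remainders `s_{β,n}(x)`. -/
noncomputable def lazyS (β : ℕ → ℝ) (x : ℝ) : ℕ → ℝ
  | 0 => β 0 * x - (⌈β 0 * x - xB (shiftBase β 1)⌉ : ℝ)
  | n + 1 => β (n + 1) * lazyS β x n -
      (⌈β (n + 1) * lazyS β x n - xB (shiftBase β (n + 2))⌉ : ℝ)

/-- The lazy digits `ξ_{β,n}(x)`; `lazyDigit β x` is the lazy β-expansion `ℓ_β(x)`. -/
noncomputable def lazyDigit (β : ℕ → ℝ) (x : ℝ) : ℕ → ℤ
  | 0 => ⌈β 0 * x - xB (shiftBase β 1)⌉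
  | n + 1 => ⌈β (n + 1) * lazyS β x n - xB (shiftBase β (n + 2))⌉

/-- Strict lexicographic order on infinite words. -/
def lexLt (a b : ℕ → ℤ) : Prop := ∃ k, (∀ i < k, a i = b i) ∧ a k < b k

/-- Lexicographic order on infinite words. -/
def lexLe (a b : ℕ → ℤ) : Prop := lexLt a b ∨ a = b

/-- `D_β`, the set of greedy β-expansions of points of `[0,1)`. -/
def greedySet (β : ℕ → ℝ) : Set (ℕ → ℤ) :=
  {a | ∃ x ∈ Set.Ico (0 : ℝ) 1, a = greedyDigit β x}

/-- `D'_β`, the set of lazy β-expansions of points of `(x_β - 1, x_β]`. -/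
def lazySet (β : ℕ → ℝ) : Set (ℕ → ℤ) :=
  {a | ∃ x ∈ Set.Ioc (xB β - 1) (xB β), a = lazyDigit β x}

/-- `Δ'_β = ⋃_n D'_{β^(n)}`. -/
def deltaSet (β : ℕ → ℝ) : Set (ℕ → ℤ) := ⋃ n, lazySet (shiftBase β n)

/-! The lazy algorithm run on `x_β - x` is the greedy algorithm run on `x`, read through `θ_β`:
since `β_n x_{β^(n)} = (⌈β_n⌉ - 1) + x_{β^(n+1)}`, the lazy step at index `n` turns
`x_{β^(n)} - r` into the digit `⌈β_n⌉ - 1 - ⌊β_n r⌋` and the remainder `x_{β^(n+1)} - {β_n r}`. So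
`ℓ_β(x_β - x) = θ_β(d_β(x))`, and `x ↦ x_β - x` maps `[0,1)` onto `(x_β - 1, x_β]`.
Since `θ_β` is an involutive homeomorphism of the word space, it also carries closures to closures. -/

@[simp]
lemma shiftBase_zero (β : ℕ → ℝ) : shiftBase β 0 = β := by
  funext m; simp [shiftBase]

@[simp]
lemma shiftBase_shiftBase (β : ℕ → ℝ) (n m : ℕ) :
    shiftBase (shiftBase β n) m = shiftBase β (n + m) := by
  funext k; simp [shiftBase, add_assoc]

lemma prodUpTo_succ (β : ℕ → ℝ) (n : ℕ) :
    prodUpTo β (n + 1) = β 0 * prodUpTo (shiftBase β 1) n := by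
  rw [prodUpTo, Finset.prod_range_succ', mul_comm]
  simp [prodUpTo, shiftBase, add_comm]

section ShiftRecursion

variable {β : ℕ → ℝ} (hβ : ∀ n, β n ≠ 0)
include hβ

lemma xB_term_shiftBase_one (n : ℕ) :
    ((⌈shiftBase β 1 n⌉ : ℝ) - 1) / prodUpTo (shiftBase β 1) n
      = β 0 * (((⌈β (n + 1)⌉ : ℝ) - 1) / prodUpTo β (n + 1)) := by
  rw [prodUpTo_succ, mul_div_assoc', mul_div_mul_left _ _ (hβ 0)]
  simp [shiftBase, add_comm]

lemma XBSummable.shift_one (hx : XBSummable β) : XBSummable (shiftBase β 1) :=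
  (((summable_nat_add_iff 1).2 hx).mul_left (β 0)).congr fun n =>
    (xB_term_shiftBase_one hβ n).symm

lemma XBSummable.shift (hx : XBSummable β) (n : ℕ) : XBSummable (shiftBase β n) := by
  induction n with
  | zero => simpa using hx
  | succ k ih => simpa using ih.shift_one (β := shiftBase β k) fun m => hβ (k + m)

lemma mul_xB (hx : XBSummable β) : β 0 * xB β = ((⌈β 0⌉ : ℝ) - 1) + xB (shiftBase β 1) := by
  rw [xB, hx.tsum_eq_zero_add, mul_add, ← tsum_mul_left, xB]
  congr 1
  · simp [prodUpTo, mul_div_cancel₀ _ (hβ 0)]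
  · exact tsum_congr fun n => (xB_term_shiftBase_one hβ n).symm

lemma mul_xB_shiftBase (hx : XBSummable β) (n : ℕ) :
    β n * xB (shiftBase β n) = ((⌈β n⌉ : ℝ) - 1) + xB (shiftBase β (n + 1)) := by
  have h := mul_xB (β := shiftBase β n) (fun m => hβ (n + m)) (hx.shift hβ n)
  rw [shiftBase_shiftBase] at h
  exact h

end ShiftRecursion

lemma ceil_intCast_sub (c : ℤ) (t : ℝ) : ⌈(c : ℝ) - t⌉ = c - ⌊t⌋ := by
  rw [sub_eq_add_neg, add_comm, Int.ceil_add_intCast, Int.ceil_neg]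
  omega

section LazyGreedy

variable {β : ℕ → ℝ} (hβ : ∀ n, β n ≠ 0) (hx : XBSummable β)
include hβ hx

lemma lazy_step_argument (n : ℕ) (r : ℝ) :
    β n * (xB (shiftBase β n) - r) - xB (shiftBase β (n + 1))
      = ((⌈β n⌉ - 1 : ℤ) : ℝ) - β n * r := by
  rw [mul_sub, mul_xB_shiftBase hβ hx]
  push_cast
  ring

lemma lazy_step_digit (n : ℕ) (r : ℝ) :
    ⌈β n * (xB (shiftBase β n) - r) - xB (shiftBase β (n + 1))⌉ = ⌈β n⌉ - 1 - ⌊β n * r⌋ := by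
  rw [lazy_step_argument hβ hx, ceil_intCast_sub]

lemma lazy_step_remainder (n : ℕ) (r : ℝ) :
    β n * (xB (shiftBase β n) - r) -
        (⌈β n * (xB (shiftBase β n) - r) - xB (shiftBase β (n + 1))⌉ : ℝ)
      = xB (shiftBase β (n + 1)) - (β n * r - ⌊β n * r⌋) := by
  rw [lazy_step_digit hβ hx, mul_sub, mul_xB_shiftBase hβ hx]
  push_cast
  ring

lemma lazyS_xB_sub (x : ℝ) (n : ℕ) :
    lazyS β (xB β - x) n = xB (shiftBase β (n + 1)) - greedyR β x n := by
  induction n with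
  | zero =>
      have h := lazy_step_remainder hβ hx 0 x
      rw [shiftBase_zero] at h
      exact h
  | succ k ih =>
      rw [lazyS, ih]
      exact lazy_step_remainder hβ hx (k + 1) _

lemma lazyDigit_xB_sub (x : ℝ) : lazyDigit β (xB β - x) = theta β (greedyDigit β x) := by
  funext n
  cases n with
  | zero =>
      have h := lazy_step_digit hβ hx 0 x
      rw [shiftBase_zero] at h
      exact h
  | succ k =>
      rw [lazyDigit, lazyS_xB_sub hβ hx]
      exact lazy_step_digit hβ hx (k + 1) _

end LazyGreedy

lemma theta_involutive (β : ℕ → ℝ) : Function.Involutive (theta β) := by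
  intro a; funext n; simp [theta]

lemma continuous_theta (β : ℕ → ℝ) : Continuous (theta β) :=
  continuous_pi fun n => continuous_const.sub (continuous_apply n)

noncomputable def thetaHomeomorph (β : ℕ → ℝ) : (ℕ → ℤ) ≃ₜ (ℕ → ℤ) where
  toFun := theta β
  invFun := theta β
  left_inv := theta_involutive β
  right_inv := theta_involutive β
  continuous_toFun := continuous_theta β
  continuous_invFun := continuous_theta β

lemma image_theta_greedySet {β : ℕ → ℝ} (hβ : ∀ n, β n ≠ 0) (hx : XBSummable β) :
    theta β '' greedySet β = lazySet β := by
  ext a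
  constructor
  · rintro ⟨_, ⟨x, hx01, rfl⟩, rfl⟩
    exact ⟨xB β - x, ⟨by linarith [hx01.2], by linarith [hx01.1]⟩,
      (lazyDigit_xB_sub hβ hx x).symm⟩
  · rintro ⟨y, hy, rfl⟩
    refine ⟨greedyDigit β (xB β - y),
      ⟨xB β - y, ⟨by linarith [hy.2], by linarith [hy.1]⟩, rfl⟩, ?_⟩
    rw [← lazyDigit_xB_sub hβ hx, sub_sub_cancel]

/-- `θ_β` restricts to bijections `D_β → D'_β` and `S_β → S'_β`. -/
theorem theta_bijOn (β : ℕ → ℝ) (hβ : IsCantorBase β) (hx : XBSummable β) :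
    Set.BijOn (theta β) (greedySet β) (lazySet β) ∧
    Set.BijOn (theta β) (closure (greedySet β)) (closure (lazySet β)) := by
  have himage : theta β '' greedySet β = lazySet β :=
    image_theta_greedySet (fun n => (zero_lt_one.trans (hβ.one_lt n)).ne') hx
  have hclosure : theta β '' closure (greedySet β) = closure (lazySet β) := by
    rw [← himage]
    exact (thetaHomeomorph β).image_closure _
  have hinj := (theta_involutive β).injective
  exact ⟨himage ▸ hinj.injOn.bijOn_image, hclosure ▸ hinj.injOn.bijOn_image⟩
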